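/- arXiv:1806.08429 — 2 statements merged into one kernel-verified Lean document; each statement's English description precedes it below -/
import Mathlib

section
/- Let K/F be a finite Galois extension of number fields, let v be a finite place of K that is unramified over F, and let p be a prime dividing the residue degree deg_F(v). Then there exists an intermediate field K' of K/F with [K:K'] = p such that the place w of K' lying below v is inert in K; that is, v is the unique place of K above w, v is unramified over w, and the residue degree of v over w equals p. -/
/-!
Since `v` is unramified over `F`, its decomposition group in `Gal(K/F)` has order
`e · f = f`, so by Cauchy it contains a subgroup `H` of order `p`. Take `K'` to be the fixed field
of `H`, so that `Gal(K/K') = H`. As `Gal(K/K')` acts transitively on the primes above `w` and fixes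
`v`, the prime `v` is the only one; `e(v | w)` divides `e(v | F) = 1`, and the fundamental identity
for `K/K'` reads `e(v | w) · f(v | w) = |H| = p`.
-/

open NumberField Module Ideal MulAction
open scoped Pointwise

theorem Subgroup.exists_le_card_eq_of_prime_dvd {G : Type*} [Group G] {D : Subgroup G} [Finite D]
    {ℓ : ℕ} (hℓ : ℓ.Prime) (hdvd : ℓ ∣ Nat.card D) : ∃ H ≤ D, Nat.card H = ℓ := by
  have := Fact.mk hℓ
  obtain ⟨g, hg⟩ := exists_prime_orderOf_dvd_card' ℓ hdvd
  exact ⟨zpowers (g : G), zpowers_le.mpr g.2, by rw [Nat.card_zpowers, orderOf_coe, hg]⟩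

namespace Ideal

theorem eq_of_under_eq_of_forall_smul_eq {A B G : Type*} [CommRing A] [CommRing B] [Algebra A B]
    [Group G] [Finite G] [MulSemiringAction G B] [SMulCommClass G A B] [Algebra.IsInvariant A B G]
    {P Q : Ideal B} [P.IsPrime] [Q.IsPrime] (hP : ∀ g : G, g • P = P)
    (h : P.under A = Q.under A) : Q = P := by
  obtain ⟨g, rfl⟩ := Algebra.IsInvariant.exists_smul_of_under_eq A B G P Q h
  exact hP g

theorem ramificationIdx_eq_one_of_tower {R S T : Type*} [CommRing R] [CommRing S] [CommRing T]
    [Algebra R S] [Algebra R T] [Algebra S T] [IsScalarTower R S T] [Module.Flat S T]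
    {P : Ideal T} (h : P.ramificationIdx R = 1) : P.ramificationIdx S = 1 :=
  Nat.eq_one_of_mul_eq_one_left (by rw [← ramificationIdx_tower (R := R) (P.under S) P, h])

section Galois

variable {R S G : Type*} [CommRing R] [IsDomain R] [CommRing S] [IsDomain S] [Algebra R S]
  [Module.Finite R S] [Module.Flat R S] [Group G] [Finite G] [MulSemiringAction G S]
  [IsGaloisGroup G R S] (P : Ideal S) [P.IsPrime] [PerfectField (P.under R).ResidueField]

theorem card_stabilizer_eq_ramificationIdx_mul_inertiaDeg :
    Nat.card (stabilizer G P) = P.ramificationIdx R * P.inertiaDeg R := by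
  rw [card_stabilizer_eq (P.under R) P, ramificationIdxIn_eq_ramificationIdx _ P G,
    inertiaDegIn_eq_inertiaDeg _ P G]

theorem ramificationIdx_mul_inertiaDeg_eq_card_of_forall_smul_eq (hP : ∀ g : G, g • P = P) :
    P.ramificationIdx R * P.inertiaDeg R = Nat.card G := by
  rw [← card_stabilizer_eq_ramificationIdx_mul_inertiaDeg (G := G),
    (stabilizer G P).eq_top_iff'.mpr hP, Subgroup.card_top]

end Galois

end Ideal

theorem stmt_2_general (F K : Type*) [Field F] [Field K] [NumberField F] [NumberField K]
    [Algebra F K] [IsGalois F K]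
    (v : Ideal (𝓞 K)) (hv : v.IsPrime) (hv0 : v ≠ ⊥)
    (hunr : Ideal.ramificationIdx'
      (v.comap (algebraMap (𝓞 F) (𝓞 K))) v = 1)
    (p : ℕ) (hp : p.Prime)
    (hdvd : p ∣ Ideal.inertiaDeg'
      (v.comap (algebraMap (𝓞 F) (𝓞 K))) v) :
    ∃ K' : IntermediateField F K, finrank K' K = p ∧
      (∀ P : Ideal (𝓞 K), P.IsPrime → P ≠ ⊥ →
        P.comap (algebraMap (𝓞 K') (𝓞 K)) = v.comap (algebraMap (𝓞 K') (𝓞 K)) → P = v) ∧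
      Ideal.ramificationIdx'
        (v.comap (algebraMap (𝓞 K') (𝓞 K))) v = 1 ∧
      Ideal.inertiaDeg'
        (v.comap (algebraMap (𝓞 K') (𝓞 K))) v = p := by
  have := hv.isMaximal hv0
  rw [ramificationIdx'_eq_ramificationIdx _ v (under_ne_bot (𝓞 F) hv0)] at hunr
  rw [inertiaDeg'_eq_inertiaDeg] at hdvd
  obtain ⟨H, hHv, hHcard⟩ := Subgroup.exists_le_card_eq_of_prime_dvd
    (D := stabilizer Gal(K/F) v) hp
    (by rwa [card_stabilizer_eq_ramificationIdx_mul_inertiaDeg (R := 𝓞 F), hunr, one_mul])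
  let K' : IntermediateField F K := FixedPoints.intermediateField H
  have := IsGaloisGroup.subgroup Gal(K/F) F K H
  have := IsGaloisGroup.of_isFractionRing H (𝓞 K') (𝓞 K) K' K
  have hHv' : ∀ g : H, g • v = v := fun g ↦ hHv g.2
  have hunr' : v.ramificationIdx (𝓞 K') = 1 := ramificationIdx_eq_one_of_tower hunr
  refine ⟨K', ?_, fun P _ _ hP ↦ eq_of_under_eq_of_forall_smul_eq hHv' hP.symm, ?_, ?_⟩
  · rw [IsGaloisGroup.finrank_fixedPoints_eq_card_subgroup, hHcard]
  · rwa [ramificationIdx'_eq_ramificationIdx _ v (under_ne_bot (𝓞 K') hv0)]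
  · rw [inertiaDeg'_eq_inertiaDeg, ← hHcard, ← one_mul (v.inertiaDeg _), ← hunr']
    exact ramificationIdx_mul_inertiaDeg_eq_card_of_forall_smul_eq v hHv'

/-- Let `K/F` be a finite Galois extension of number fields, `v` a finite
place of `K` unramified over `F`, and `p` a prime dividing the residue degree of `v` over `F`.
Then there is an intermediate field `K'` of `K/F` with `[K:K'] = p` such that the place `w`
of `K'` below `v` is inert in `K`: `v` is the unique place of `K` above `w`, `v` is
unramified over `w`, and the residue degree of `v` over `w` is `p`. -/
theorem stmt_2 (F K : Type*) [Field F] [Field K] [NumberField F] [NumberField K]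
    [Algebra F K] [FiniteDimensional F K] [IsGalois F K]
    (v : Ideal (𝓞 K)) (hv : v.IsPrime) (hv0 : v ≠ ⊥)
    (hunr : Ideal.ramificationIdx'
      (v.comap (algebraMap (𝓞 F) (𝓞 K))) v = 1)
    (p : ℕ) (hp : p.Prime)
    (hdvd : p ∣ Ideal.inertiaDeg'
      (v.comap (algebraMap (𝓞 F) (𝓞 K))) v) :
    ∃ K' : IntermediateField F K, finrank K' K = p ∧
      (∀ P : Ideal (𝓞 K), P.IsPrime → P ≠ ⊥ →
        P.comap (algebraMap (𝓞 K') (𝓞 K)) = v.comap (algebraMap (𝓞 K') (𝓞 K)) → P = v) ∧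
      Ideal.ramificationIdx'
        (v.comap (algebraMap (𝓞 K') (𝓞 K))) v = 1 ∧
      Ideal.inertiaDeg'
        (v.comap (algebraMap (𝓞 K') (𝓞 K))) v = p :=
  stmt_2_general F K v hv hv0 hunr p hp hdvd
end

section
/- Let G be a group and ρ an irreducible complex representation of G on a finite-dimensional complex vector space of dimension n ≥ 1. Then the set of group homomorphisms η: G → ℂˣ such that the twisted representation ρ ⊗ η is isomorphic to ρ has cardinality at most n². -/
open Module

/-- The twist `ρ ⊗ η` of a representation `ρ` of `G` on a complex vector space `V` by a
character `η : G → ℂˣ`: it acts on the same space by `(ρ ⊗ η)(g) = η(g) • ρ(g)`. -/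
def Representation.twist {G V : Type*} [Group G] [AddCommGroup V] [Module ℂ V]
    (ρ : Representation ℂ G V) (η : G →* ℂˣ) : Representation ℂ G V where
  toFun g := (η g : ℂ) • ρ g
  map_one' := by simp
  map_mul' g h := by
    simp only [map_mul, Units.val_mul, smul_mul_smul_comm]

/-!
An isomorphism `e : ρ ≅ ρ ⊗ η` is a nonzero vector of `End V` on which `G`, acting by
conjugation, acts through the character `η⁻¹`. Nonzero vectors on which `G` acts through
pairwise distinct characters are linearly independent, so there are at most `dim End V = n²`
such `η`.
-/

namespace Representation

section Weights

variable {K G W : Type*} [Field K] [Monoid G] [AddCommGroup W] [Module K W]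

def weights (ρ : Representation K G W) : Set (G →* K) :=
  {χ | ∃ v ≠ 0, ∀ g, ρ g v = χ g • v}

/-- Applying a functional that does not vanish on `v i` to a relation among the `ρ g (v j)`
reduces this to Dedekind's independence of characters. -/
theorem linearIndependent_of_apply_eq_smul (ρ : Representation K G W) {ι : Type*}
    {χ : ι → G →* K} (hχ : Function.Injective χ) {v : ι → W} (hv : ∀ i, v i ≠ 0)
    (hρv : ∀ i g, ρ g (v i) = χ i g • v i) : LinearIndependent K v := by
  classical
  have hχ_indep : LinearIndependent K fun i => (χ i : G → K) :=
    (linearIndependent_monoidHom G K).comp χ hχ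
  rw [linearIndependent_iff'] at hχ_indep ⊢
  intro s c hc i hi
  obtain ⟨φ, hφ⟩ := Projective.exists_dual_ne_zero K (hv i)
  have hrel : ∑ j ∈ s, (c j * φ (v j)) • (χ j : G → K) = 0 := by
    funext g
    have := congrArg (φ ∘ₗ ρ g) hc
    simpa [map_sum, hρv, mul_comm, mul_left_comm] using this
  exact (mul_eq_zero.mp (hχ_indep s _ hrel i hi)).resolve_right hφ

theorem weights_finite_and_ncard_le_finrank [FiniteDimensional K W] (ρ : Representation K G W) :
    ρ.weights.Finite ∧ ρ.weights.ncard ≤ finrank K W := by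
  choose v hv0 hv using fun χ : ρ.weights => χ.2
  have hindep : LinearIndependent K v :=
    ρ.linearIndependent_of_apply_eq_smul Subtype.val_injective hv0 hv
  have : Finite ρ.weights := hindep.finite_of_isNoetherian
  refine ⟨Set.toFinite _, ?_⟩
  have := Fintype.ofFinite ρ.weights
  rw [← Nat.card_coe_set_eq, Nat.card_eq_fintype_card]
  exact hindep.fintype_card_le_finrank

end Weights

variable {G V : Type*} [Group G] [AddCommGroup V] [Module ℂ V]

theorem linHom_self_apply_of_intertwines_twist (ρ : Representation ℂ G V) (η : G →* ℂˣ)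
    {e : V →ₗ[ℂ] V} (he : ∀ g v, e (ρ g v) = ρ.twist η g (e v)) (g : G) :
    ρ.linHom ρ g e = (η g⁻¹ : ℂ) • e := by
  ext v
  have h := he g⁻¹ v
  simp only [twist, MonoidHom.coe_mk, OneHom.coe_mk, LinearMap.smul_apply] at h
  simp [h]

end Representation

theorem stmt_9_general (G V : Type*) [Group G] [AddCommGroup V] [Module ℂ V] [FiniteDimensional ℂ V]
    (n : ℕ) (hn : 1 ≤ n) (ρ : Representation ℂ G V) (hdim : finrank ℂ V = n) :
    {η : G →* ℂˣ | ∃ e : V ≃ₗ[ℂ] V, ∀ (g : G) (v : V),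
        e (ρ g v) = ρ.twist η g (e v)}.Finite ∧
      {η : G →* ℂˣ | ∃ e : V ≃ₗ[ℂ] V, ∀ (g : G) (v : V),
        e (ρ g v) = ρ.twist η g (e v)}.ncard ≤ n ^ 2 := by
  set S := {η : G →* ℂˣ | ∃ e : V ≃ₗ[ℂ] V, ∀ (g : G) (v : V),
    e (ρ g v) = ρ.twist η g (e v)}
  have : Nontrivial V := Module.nontrivial_of_finrank_pos (R := ℂ) (by omega)
  let toWeight : (G →* ℂˣ) → G →* ℂ := fun η => (Units.coeHom ℂ).comp η⁻¹
  have hinj : Function.Injective toWeight := fun η₁ η₂ h => inv_injective <|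
    MonoidHom.ext fun g => Units.ext (DFunLike.congr_fun h g)
  have hmaps : Set.MapsTo toWeight S (ρ.linHom ρ).weights := by
    rintro η ⟨e, he⟩
    refine ⟨e.toLinearMap, LinearMap.ne_zero_of_injective e.injective, fun g => ?_⟩
    simpa [toWeight] using ρ.linHom_self_apply_of_intertwines_twist η he g
  obtain ⟨hfin, hcard⟩ := (ρ.linHom ρ).weights_finite_and_ncard_le_finrank
  refine ⟨(hfin.subset hmaps.image_subset).of_finite_image hinj.injOn, ?_⟩
  calc S.ncard ≤ (ρ.linHom ρ).weights.ncard :=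
        Set.ncard_le_ncard_of_injOn _ hmaps hinj.injOn hfin
    _ ≤ finrank ℂ (V →ₗ[ℂ] V) := hcard
    _ = n ^ 2 := by rw [finrank_linearMap, hdim, sq]

/-- Let `G` be a group and `ρ` an irreducible complex representation of `G`
on a finite-dimensional complex vector space of dimension `n ≥ 1`.  Then the set of
homomorphisms `η : G → ℂˣ` such that `ρ ⊗ η ≅ ρ` has cardinality at most `n²`. -/
theorem stmt_9 (G V : Type*) [Group G] [AddCommGroup V] [Module ℂ V] [FiniteDimensional ℂ V]
    (n : ℕ) (hn : 1 ≤ n) (ρ : Representation ℂ G V) (hdim : finrank ℂ V = n)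
    (hirr : ∀ U : Submodule ℂ V, (∀ g : G, ∀ v ∈ U, ρ g v ∈ U) → U = ⊥ ∨ U = ⊤) :
    {η : G →* ℂˣ | ∃ e : V ≃ₗ[ℂ] V, ∀ (g : G) (v : V),
        e (ρ g v) = ρ.twist η g (e v)}.Finite ∧
      {η : G →* ℂˣ | ∃ e : V ≃ₗ[ℂ] V, ∀ (g : G) (v : V),
        e (ρ g v) = ρ.twist η g (e v)}.ncard ≤ n ^ 2 :=
  stmt_9_general G V n hn ρ hdim
end
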